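/- Let w ∈ S_n, let v ⊆ w be a subword of size m, and set u := perm(v) ∈ S_m. If B ∈ bpd(w;v) is a reduced bumpless pipe dream, then φ_v^w(B) is reduced; consequently φ_v^w(bpd(w;v)) ⊆ mbpd(u). -/
import Mathlib


/-!
Formalization of bumpless pipe dreams (BPDs).

A bumpless pipe dream of size `n` assigns one of six tiles (blank, horizontal,
vertical, crossing, r-elbow, j-elbow) to each cell of the `n × n` grid, subject
to matching and boundary conditions.  We additionally include a `bump` tile
(an r-elbow together with a j-elbow in one cell), which is used only in
K-theoretic resolutions of BPDs.
-/

/-- The tile types: the six BPD tiles together with the bump tile used in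
K-theoretic resolutions. -/
inductive Tile : Type
  | blank | horiz | vert | cross | bump | relbow | jelbow
  deriving DecidableEq

namespace Tile

/-- Does a pipe segment meet the south edge of the tile? -/
def south : Tile → Bool
  | vert => true | cross => true | bump => true | relbow => true
  | _ => false

/-- Does a pipe segment meet the north edge of the tile? -/
def north : Tile → Bool
  | vert => true | cross => true | bump => true | jelbow => true
  | _ => false

/-- Does a pipe segment meet the west edge of the tile? -/
def west : Tile → Bool
  | horiz => true | cross => true | bump => true | jelbow => true
  | _ => false

/-- Does a pipe segment meet the east edge of the tile? -/
def east : Tile → Bool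
  | horiz => true | cross => true | bump => true | relbow => true
  | _ => false

/-- A pipe entering the tile `t` (from the south if `d = true`, from the west if
`d = false`) exits through the east edge; otherwise it exits through the north
edge. -/
def exitEast (t : Tile) (d : Bool) : Bool :=
  if d then (t == relbow || t == bump) else !(t == jelbow || t == bump)

end Tile

/-- A tile diagram of size `n`: an assignment of a tile to each cell `(i, j)`
(row `i` from the top, column `j` from the left, `0`-indexed) of the `n × n`
grid, such that adjacent tiles match along shared edges, a segment meets the
south boundary edge of every column and the east boundary edge of every row,
and no segment meets the north or west boundary of the grid.  (Cells outside
the grid are blank, as a normalization.)  A diagram may use the `bump` tile;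
honest bumpless pipe dreams (`BPD`) do not. -/
structure Diagram (n : ℕ) : Type where
  tile : ℕ → ℕ → Tile
  vmatch : ∀ i j, i + 1 < n → j < n → (tile i j).south = (tile (i + 1) j).north
  hmatch : ∀ i j, i < n → j + 1 < n → (tile i j).east = (tile i (j + 1)).west
  bottom : ∀ j, j < n → (tile (n - 1) j).south = true
  right : ∀ i, i < n → (tile i (n - 1)).east = true
  top : ∀ j, j < n → (tile 0 j).north = false
  left : ∀ i, i < n → (tile i 0).west = false
  outside : ∀ i j, ¬(i < n ∧ j < n) → tile i j = Tile.blank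

/-- A bumpless pipe dream of size `n`: a diagram using only the six BPD tiles
(no bump tiles). -/
structure BPD (n : ℕ) extends Diagram n where
  nobump : ∀ i j, tile i j ≠ Tile.bump

namespace Diagram

variable {n : ℕ}

/-- One step of a pipe: a pipe currently in cell `(σ.1, σ.2.1)`, having entered
from the south if `σ.2.2 = true` (from the west otherwise), moves to the next
cell (east, entering from the west; or north, entering from the south). -/
def Step (D : Diagram n) (σ σ' : ℕ × ℕ × Bool) : Prop :=
  σ.1 < n ∧ σ.2.1 < n ∧
    (if (D.tile σ.1 σ.2.1).exitEast σ.2.2 then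
        σ.2.1 + 1 < n ∧ σ' = (σ.1, σ.2.1 + 1, false)
      else
        0 < σ.1 ∧ σ' = (σ.1 - 1, σ.2.1, true))

/-- The pipe entering at the bottom of column `y` passes through the cell `c`. -/
def Passes (D : Diagram n) (y : ℕ) (c : ℕ × ℕ) : Prop :=
  ∃ d : Bool, Relation.ReflTransGen D.Step (n - 1, y, true) (c.1, c.2, d)

/-- The pipe entering at the bottom of column `y` exits at the right of row `x`;
that is, `y → x` is a pipe of the diagram. -/
def ExitsAt (D : Diagram n) (y x : ℕ) : Prop :=
  ∃ d : Bool, Relation.ReflTransGen D.Step (n - 1, y, true) (x, n - 1, d) ∧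
    (D.tile x (n - 1)).exitEast d = true

/-- The permutation of the diagram is `w`: for every row `x`, `w x → x` is a
pipe of the diagram. -/
def HasPerm (D : Diagram n) (w : Equiv.Perm (Fin n)) : Prop :=
  ∀ x : Fin n, D.ExitsAt (w x) x

/-- The set of crossing tiles shared by the pipes entering at the bottoms of
columns `y₁` and `y₂`. -/
def SharedCrossings (D : Diagram n) (y₁ y₂ : ℕ) : Set (ℕ × ℕ) :=
  {c | D.tile c.1 c.2 = Tile.cross ∧ D.Passes y₁ c ∧ D.Passes y₂ c}

/-- The diagram is reduced: any two distinct pipes pass through at most one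
common crossing tile. -/
def Reduced (D : Diagram n) : Prop :=
  ∀ y₁ y₂, y₁ < n → y₂ < n → y₁ ≠ y₂ → (D.SharedCrossings y₁ y₂).Subsingleton

/-- `y → x` is a removable pipe of the diagram: it is a pipe, the tile at
`(x, y)` is an r-elbow, and it is the only r-elbow tile in row `x` and also the
only r-elbow tile in column `y`. -/
def RemovablePipe (D : Diagram n) (y x : ℕ) : Prop :=
  D.ExitsAt y x ∧ D.tile x y = Tile.relbow ∧
    (∀ j, j ≠ y → D.tile x j ≠ Tile.relbow) ∧
    (∀ i, i ≠ x → D.tile i y ≠ Tile.relbow)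

/-- The diagram is minimal: it has no removable pipe. -/
def Minimal (D : Diagram n) : Prop := ∀ y x, ¬ D.RemovablePipe y x

/-- The number of j-elbow tiles of the diagram. -/
def jcount (D : Diagram n) : ℕ :=
  ((Finset.range n ×ˢ Finset.range n).filter
    (fun c => D.tile c.1 c.2 = Tile.jelbow)).card

end Diagram

namespace BPD

variable {n m : ℕ}

/-- `B ∈ BPD(w; v)` for the subword `v` of `w` with (strictly increasing) index
sequence `s : Fin m ↪o Fin n`: the permutation of `B` is `w` and the removable
pipes of `B` are precisely the pipes `w k → k` for the indices `k` of `w` not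
used by the subword. -/
def InBPDv (B : BPD n) (w : Equiv.Perm (Fin n)) (s : Fin m ↪o Fin n) : Prop :=
  B.toDiagram.HasPerm w ∧
    ∀ y x : ℕ, B.toDiagram.RemovablePipe y x ↔
      ∃ k : Fin n, k ∉ Set.range s ∧ x = (k : ℕ) ∧ y = (w k : ℕ)

end BPD

/-- `c` comes strictly before `c'` in the (weakly north-east) traversal order of
a pipe: `c` is weakly south-west of `c'` and is a different cell. -/
def Before (c c' : ℕ × ℕ) : Prop := c'.1 ≤ c.1 ∧ c.2 ≤ c'.2 ∧ c ≠ c'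

namespace Diagram

/-- The pipes entering in columns `y₁` and `y₂` pass through a common crossing
tile strictly before the cell `c`. -/
def CrossedBefore {n : ℕ} (D : Diagram n) (y₁ y₂ : ℕ) (c : ℕ × ℕ) : Prop :=
  ∃ c' ∈ D.SharedCrossings y₁ y₂, Before c' c

end Diagram

/-- `D` is the K-theoretic resolution `B_K` of the bumpless pipe dream `B`:
each crossing tile of `B` either remains a crossing or becomes a bump in `D`
(all other tiles are unchanged), any two pipes of `D` cross at most once, and at
a former crossing tile the two pipes of `D` passing through it bounce (bump)
there exactly when they have already crossed before reaching it. -/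
structure IsKRes {n : ℕ} (B : BPD n) (D : Diagram n) : Prop where
  agree : ∀ i j, B.tile i j ≠ Tile.cross → D.tile i j = B.tile i j
  res : ∀ i j, B.tile i j = Tile.cross →
    D.tile i j = Tile.cross ∨ D.tile i j = Tile.bump
  once : D.Reduced
  bump_iff : ∀ i j y₁ y₂, y₁ < n → y₂ < n → y₁ ≠ y₂ →
    D.Passes y₁ (i, j) → D.Passes y₂ (i, j) → B.tile i j = Tile.cross →
    (D.tile i j = Tile.bump ↔ D.CrossedBefore y₁ y₂ (i, j))

/-- The permutation `w` contains the pattern `p`. -/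
def PermContains {n k : ℕ} (w : Equiv.Perm (Fin n)) (p : Equiv.Perm (Fin k)) : Prop :=
  ∃ f : Fin k ↪o Fin n, ∀ a b : Fin k, p a < p b ↔ w (f a) < w (f b)

/-- The pattern `1243` (as a permutation of `Fin 4`, `0`-indexed). -/
def p1243 : Equiv.Perm (Fin 4) := Equiv.swap 2 3

/-- The pattern `2143` (as a permutation of `Fin 4`, `0`-indexed). -/
def p2143 : Equiv.Perm (Fin 4) := Equiv.swap 0 1 * Equiv.swap 2 3
set_option linter.unusedSectionVars false

namespace BPDAux

lemma tWF : ∀ t : Tile, t.west = false → t ≠ Tile.relbow → t ≠ Tile.bump →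
    t = Tile.blank ∨ t = Tile.vert := by
  intro t h h1 h2; cases t <;> simp_all [Tile.west]

lemma tWT : ∀ t : Tile, t.west = true → t ≠ Tile.bump →
    t = Tile.horiz ∨ t = Tile.cross ∨ t = Tile.jelbow := by
  intro t h h1; cases t <;> simp_all [Tile.west]

lemma tNF : ∀ t : Tile, t.north = false → t ≠ Tile.relbow → t ≠ Tile.bump →
    t = Tile.blank ∨ t = Tile.horiz := by
  intro t h h1 h2; cases t <;> simp_all [Tile.north]

lemma tNT : ∀ t : Tile, t.north = true → t ≠ Tile.bump →
    t = Tile.vert ∨ t = Tile.cross ∨ t = Tile.jelbow := by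
  intro t h h1; cases t <;> simp_all [Tile.north]

lemma tST : ∀ t : Tile, t.south = true → t ≠ Tile.relbow → t ≠ Tile.bump →
    t = Tile.vert ∨ t = Tile.cross := by
  intro t h h1 h2; cases t <;> simp_all [Tile.south]

lemma tET : ∀ t : Tile, t.east = true → t ≠ Tile.relbow → t ≠ Tile.bump →
    t = Tile.horiz ∨ t = Tile.cross := by
  intro t h h1 h2; cases t <;> simp_all [Tile.east]

lemma exT : ∀ t : Tile, t ≠ Tile.relbow → t ≠ Tile.bump → t.exitEast true = false := by
  intro t h1 h2; cases t <;> simp_all [Tile.exitEast]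

lemma exF : ∀ t : Tile, t ≠ Tile.jelbow → t ≠ Tile.bump → t.exitEast false = true := by
  intro t h1 h2; cases t <;> simp_all [Tile.exitEast]

section RowCol

variable {n : ℕ} (B : BPD n) {k y : ℕ} (hk : k < n) (hy : y < n)
  (hrel : B.tile k y = Tile.relbow)

section Row

variable (hrow : ∀ j, j ≠ y → B.tile k j ≠ Tile.relbow)

include hk hy hrel hrow

lemma rowWF : ∀ j, j ≤ y → (B.tile k j).west = false := by
  intro j
  induction j with
  | zero => intro _; exact B.left k hk
  | succ j ih =>
    intro hj
    have he : (B.tile k j).east = false := by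
      rcases tWF (B.tile k j) (ih (by omega)) (hrow j (by omega)) (B.nobump k j) with h | h <;>
        simp [h, Tile.east]
    rw [← B.hmatch k j hk (by omega), he]

lemma rowDeadAux : ∀ dlt j, y < j → j + dlt = n - 1 → (B.tile k j).west = false →
    (B.tile k (n-1)).east = false := by
  intro dlt
  induction dlt with
  | zero =>
    intro j hj hj2 hw
    have he : (B.tile k j).east = false := by
      rcases tWF (B.tile k j) hw (hrow j (by omega)) (B.nobump k j) with h | h <;>
        simp [h, Tile.east]
    rw [show n - 1 = j by omega]; exact he
  | succ dlt ih =>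
    intro j hj hj2 hw
    have he : (B.tile k j).east = false := by
      rcases tWF (B.tile k j) hw (hrow j (by omega)) (B.nobump k j) with h | h <;>
        simp [h, Tile.east]
    have hw2 : (B.tile k (j+1)).west = false := by
      rw [← B.hmatch k j hk (by omega), he]
    exact ih (j+1) (by omega) (by omega) hw2

lemma rowDead : ∀ j, y < j → j < n → (B.tile k j).west = false → False := by
  intro j hj hj2 hw
  have := rowDeadAux B hk hy hrel hrow (n - 1 - j) j hj (by omega) hw
  rw [B.right k hk] at this
  simp at this

lemma rowET : ∀ j, y ≤ j → j < n → (B.tile k j).east = true := by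
  intro j hj
  induction j, hj using Nat.le_induction with
  | base => intro _; rw [hrel]; rfl
  | succ j hj ih =>
    intro hj1
    have hw : (B.tile k (j+1)).west = true := by
      rw [← B.hmatch k j hk hj1]; exact ih (by omega)
    rcases tWT (B.tile k (j+1)) hw (B.nobump k (j+1)) with h | h | h
    · rw [h]; rfl
    · rw [h]; rfl
    · exfalso
      have he : (B.tile k (j+1)).east = false := by rw [h]; rfl
      by_cases hend : j + 1 = n - 1
      · rw [hend, B.right k hk] at he; simp at he
      · have hw2 : (B.tile k (j+2)).west = false := by
          rw [← B.hmatch k (j+1) hk (by omega), he]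
        exact rowDead B hk hy hrel hrow (j+2) (by omega) (by omega) hw2

lemma rowNoJelbow : ∀ j, j ≠ y → B.tile k j ≠ Tile.jelbow := by
  intro j hj hcon
  rcases lt_or_ge j n with hjn | hjn
  · rcases lt_or_ge j y with h | h
    · have := rowWF B hk hy hrel hrow j (by omega)
      rw [hcon] at this; simp [Tile.west, Tile.east, Tile.north, Tile.south] at this
    · have := rowET B hk hy hrel hrow j (by omega) hjn
      rw [hcon] at this; simp [Tile.west, Tile.east, Tile.north, Tile.south] at this
  · have := B.outside k j (by omega)
    rw [hcon] at this; exact Tile.noConfusion this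

lemma rowNS : ∀ j, j ≠ y → (B.tile k j).north = (B.tile k j).south := by
  intro j hj
  rcases lt_or_ge j n with hjn | hjn
  · rcases lt_or_ge j y with h | h
    · rcases tWF (B.tile k j) (rowWF B hk hy hrel hrow j (by omega)) (hrow j hj)
        (B.nobump k j) with h' | h' <;> rw [h'] <;> rfl
    · rcases tET (B.tile k j) (rowET B hk hy hrel hrow j h hjn) (hrow j hj)
        (B.nobump k j) with h' | h' <;> rw [h'] <;> rfl
  · rw [B.outside k j (by omega)]; rfl

end Row

section Col

variable (hcol : ∀ i, i ≠ k → B.tile i y ≠ Tile.relbow)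

include hk hy hrel hcol

lemma colNF : ∀ i, i ≤ k → (B.tile i y).north = false := by
  intro i
  induction i with
  | zero => intro _; exact B.top y hy
  | succ i ih =>
    intro hi
    have hs : (B.tile i y).south = false := by
      rcases tNF (B.tile i y) (ih (by omega)) (hcol i (by omega)) (B.nobump i y) with h | h <;>
        simp [h, Tile.south]
    rw [← B.vmatch i y (by omega) hy, hs]

lemma colDeadAux : ∀ dlt i, k < i → i + dlt = n - 1 → (B.tile i y).north = false →
    (B.tile (n-1) y).south = false := by
  intro dlt
  induction dlt with
  | zero =>
    intro i hi hi2 hn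
    have hs : (B.tile i y).south = false := by
      rcases tNF (B.tile i y) hn (hcol i (by omega)) (B.nobump i y) with h | h <;>
        simp [h, Tile.south]
    rw [show n - 1 = i by omega]; exact hs
  | succ dlt ih =>
    intro i hi hi2 hn
    have hs : (B.tile i y).south = false := by
      rcases tNF (B.tile i y) hn (hcol i (by omega)) (B.nobump i y) with h | h <;>
        simp [h, Tile.south]
    have hn2 : (B.tile (i+1) y).north = false := by
      rw [← B.vmatch i y (by omega) hy, hs]
    exact ih (i+1) (by omega) (by omega) hn2

lemma colDead : ∀ i, k < i → i < n → (B.tile i y).north = false → False := by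
  intro i hi hi2 hn
  have := colDeadAux B hk hy hrel hcol (n - 1 - i) i hi (by omega) hn
  rw [B.bottom y hy] at this
  simp at this

lemma colST : ∀ i, k ≤ i → i < n → (B.tile i y).south = true := by
  intro i hi
  induction i, hi using Nat.le_induction with
  | base => intro _; rw [hrel]; rfl
  | succ i hi ih =>
    intro hi1
    have hn : (B.tile (i+1) y).north = true := by
      rw [← B.vmatch i y hi1 hy]; exact ih (by omega)
    rcases tNT (B.tile (i+1) y) hn (B.nobump (i+1) y) with h | h | h
    · rw [h]; rfl
    · rw [h]; rfl
    · exfalso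
      have hs : (B.tile (i+1) y).south = false := by rw [h]; rfl
      by_cases hend : i + 1 = n - 1
      · rw [hend, B.bottom y hy] at hs; simp at hs
      · have hn2 : (B.tile (i+2) y).north = false := by
          rw [← B.vmatch (i+1) y (by omega) hy, hs]
        exact colDead B hk hy hrel hcol (i+2) (by omega) (by omega) hn2

lemma colNoJelbow : ∀ i, i ≠ k → B.tile i y ≠ Tile.jelbow := by
  intro i hi hcon
  rcases lt_or_ge i n with hin | hin
  · rcases lt_or_ge i k with h | h
    · have := colNF B hk hy hrel hcol i (by omega)
      rw [hcon] at this; simp [Tile.west, Tile.east, Tile.north, Tile.south] at this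
    · have := colST B hk hy hrel hcol i (by omega) hin
      rw [hcon] at this; simp [Tile.west, Tile.east, Tile.north, Tile.south] at this
  · have := B.outside i y (by omega)
    rw [hcon] at this; exact Tile.noConfusion this

lemma colEW : ∀ i, i ≠ k → (B.tile i y).east = (B.tile i y).west := by
  intro i hi
  rcases lt_or_ge i n with hin | hin
  · rcases lt_or_ge i k with h | h
    · rcases tNF (B.tile i y) (colNF B hk hy hrel hcol i (by omega)) (hcol i hi)
        (B.nobump i y) with h' | h' <;> rw [h'] <;> rfl
    · rcases tST (B.tile i y) (colST B hk hy hrel hcol i (by omega) hin) (hcol i hi)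
        (B.nobump i y) with h' | h' <;> rw [h'] <;> rfl
  · rw [B.outside i y (by omega)]; rfl

end Col

end RowCol

section Steps


variable {n : ℕ}

lemma stepE {D : Diagram n} {r c : ℕ} {d : Bool} (hr : r < n) (hc : c < n) (hc1 : c+1 < n)
    (hex : (D.tile r c).exitEast d = true) : D.Step (r, c, d) (r, c+1, false) := by
  refine ⟨hr, hc, ?_⟩
  show if (D.tile r c).exitEast d = true then _ ∧ _ else _ ∧ _
  rw [if_pos hex]
  exact ⟨hc1, rfl⟩

lemma stepN {D : Diagram n} {r c : ℕ} {d : Bool} (hr : r < n) (hc : c < n) (hr0 : 0 < r)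
    (hex : (D.tile r c).exitEast d = false) : D.Step (r, c, d) (r-1, c, true) := by
  refine ⟨hr, hc, ?_⟩
  show if (D.tile r c).exitEast d = true then _ ∧ _ else _ ∧ _
  rw [if_neg (by simp [hex])]
  exact ⟨hr0, rfl⟩

lemma step_cases {D : Diagram n} {σ σ' : ℕ × ℕ × Bool} (h : D.Step σ σ') :
    σ.1 < n ∧ σ.2.1 < n ∧
      (((D.tile σ.1 σ.2.1).exitEast σ.2.2 = true ∧ σ.2.1+1 < n ∧ σ' = (σ.1, σ.2.1+1, false)) ∨
       ((D.tile σ.1 σ.2.1).exitEast σ.2.2 = false ∧ 0 < σ.1 ∧ σ' = (σ.1-1, σ.2.1, true))) := by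
  obtain ⟨h1, h2, h3⟩ := h
  refine ⟨h1, h2, ?_⟩
  by_cases he : (D.tile σ.1 σ.2.1).exitEast σ.2.2 = true
  · rw [if_pos he] at h3; exact Or.inl ⟨he, h3⟩
  · rw [if_neg he] at h3; exact Or.inr ⟨by simpa using he, h3⟩



end Steps

end BPDAux
namespace BPDAux

section Ctx

variable {n m : ℕ}

/-- `r` is a selected index for the order embedding `f`. -/
def Sel (f : Fin m ↪o Fin n) (r : ℕ) : Prop := ∃ i : Fin m, (f i : ℕ) = r

lemma fval_lt (f : Fin m ↪o Fin n) (i i' : Fin m) : (f i : ℕ) < (f i' : ℕ) ↔ (i : ℕ) < (i' : ℕ) := by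
  rw [← Fin.lt_def, f.lt_iff_lt, Fin.lt_def]

lemma fval_inj (f : Fin m ↪o Fin n) (i i' : Fin m) (h : (f i : ℕ) = (f i' : ℕ)) : i = i' :=
  f.injective (Fin.val_injective h)

variable (w : Equiv.Perm (Fin n)) (s t : Fin m ↪o Fin n) (u : Equiv.Perm (Fin m))
  (B : BPD n)
  (hst : ∀ i : Fin m, w (s i) = t (u i))
  (hB : B.InBPDv w s)

include hB in
lemma hrem : ∀ k : Fin n, k ∉ Set.range s → B.toDiagram.RemovablePipe (w k) k :=
  fun k hk => (hB.2 _ _).mpr ⟨k, hk, rfl, rfl⟩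

include hst in
lemma tNe : ∀ (j : Fin m) (k : Fin n), k ∉ Set.range s → (t j : ℕ) ≠ (w k : ℕ) := by
  intro j k hk hcon
  have h1 : w (s (u.symm j)) = t j := by rw [hst (u.symm j), Equiv.apply_symm_apply]
  have h2 : t j = w k := Fin.val_injective hcon
  exact hk ⟨u.symm j, w.injective (h1.trans h2)⟩

lemma remRow : ∀ r, r < n → ¬ Sel s r → ∃ k : Fin n, k ∉ Set.range s ∧ (k : ℕ) = r := by
  intro r hr hsel
  refine ⟨⟨r, hr⟩, fun ⟨i, hi⟩ => hsel ⟨i, by rw [hi]⟩, rfl⟩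

include hst in
lemma remCol : ∀ c, c < n → ¬ Sel t c → ∃ k : Fin n, k ∉ Set.range s ∧ (w k : ℕ) = c := by
  intro c hc hsel
  refine ⟨w.symm ⟨c, hc⟩, fun ⟨i, hi⟩ => hsel ⟨u i, ?_⟩, by rw [Equiv.apply_symm_apply]⟩
  rw [← hst i, hi, Equiv.apply_symm_apply]

include hst hB in
lemma L1 : ∀ r c, r < n → ¬ Sel s r → ¬ (∃ k : Fin n, k ∉ Set.range s ∧ (w k : ℕ) = c) →
    B.tile r c ≠ Tile.relbow ∧ B.tile r c ≠ Tile.jelbow ∧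
      (B.tile r c).north = (B.tile r c).south := by
  intro r c hr hsel hc
  obtain ⟨k, hk, rfl⟩ := remRow s r hr hsel
  obtain ⟨_, hrel, hrowu, _⟩ := hrem w s B hB k hk
  have hcne : c ≠ (w k : ℕ) := fun h => hc ⟨k, hk, h.symm⟩
  exact ⟨hrowu c hcne, rowNoJelbow B k.isLt (w k).isLt hrel hrowu c hcne,
    rowNS B k.isLt (w k).isLt hrel hrowu c hcne⟩

include hst hB in
lemma L1' : ∀ r c, r < n → ¬ Sel s r → Sel t c →
    B.tile r c ≠ Tile.relbow ∧ B.tile r c ≠ Tile.jelbow ∧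
      (B.tile r c).north = (B.tile r c).south := by
  intro r c hr hsel ⟨j, hj⟩
  exact L1 w s t u B hst hB r c hr hsel (fun ⟨k, hk, hc⟩ => tNe w s t u hst j k hk (by omega))

include hst hB in
lemma L2 : ∀ r c, c < n → ¬ Sel t c → Sel s r →
    B.tile r c ≠ Tile.relbow ∧ B.tile r c ≠ Tile.jelbow ∧
      (B.tile r c).east = (B.tile r c).west := by
  intro r c hc hsel hr
  obtain ⟨k, hk, rfl⟩ := remCol w s t u hst c hc hsel
  obtain ⟨_, hrel, _, hcolu⟩ := hrem w s B hB k hk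
  have hrne : r ≠ (k : ℕ) := by
    obtain ⟨i, hi⟩ := hr
    intro h
    exact hk ⟨i, Fin.val_injective (by omega)⟩
  exact ⟨hcolu r hrne, colNoJelbow B k.isLt (w k).isLt hrel hcolu r hrne,
    colEW B k.isLt (w k).isLt hrel hcolu r hrne⟩

include hst hB in
lemma L1exit : ∀ r c, r < n → ¬ Sel s r → Sel t c → (B.tile r c).exitEast true = false := by
  intro r c hr hsel hc
  obtain ⟨h1, _, _⟩ := L1' w s t u B hst hB r c hr hsel hc
  exact exT _ h1 (B.nobump r c)

include hst hB in
lemma L2exit : ∀ r c, c < n → ¬ Sel t c → Sel s r → (B.tile r c).exitEast false = true := by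
  intro r c hc hsel hr
  obtain ⟨_, h2, _⟩ := L2 w s t u B hst hB r c hc hsel hr
  exact exF _ h2 (B.nobump r c)

include hst hB in
lemma vchain : ∀ c, c < n → ∀ a b, a < b → b < n →
    (∀ r, a < r → r < b → ¬ Sel s r) → (Sel t c) →
    (B.tile a c).south = (B.tile b c).north := by
  intro c hc a b hab
  induction b, hab using Nat.le_induction with
  | base => intro hb _ _; exact B.vmatch a c hb hc
  | succ b hb ih =>
    intro hb1 hmid hselc
    calc (B.tile a c).south = (B.tile b c).north :=
          ih (by omega) (fun r h1 h2 => hmid r h1 (by omega)) hselc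
      _ = (B.tile b c).south :=
          (L1' w s t u B hst hB b c (by omega) (hmid b hb (by omega)) hselc).2.2
      _ = (B.tile (b+1) c).north := B.vmatch b c hb1 hc

include hst hB in
lemma hchain : ∀ r, r < n → ∀ a b, a < b → b < n →
    (∀ c, a < c → c < b → ¬ Sel t c) → (Sel s r) →
    (B.tile r a).east = (B.tile r b).west := by
  intro r hr a b hab
  induction b, hab using Nat.le_induction with
  | base => intro hb _ _; exact B.hmatch r a hr hb
  | succ b hb ih =>
    intro hb1 hmid hselr
    calc (B.tile r a).east = (B.tile r b).west :=
          ih (by omega) (fun c h1 h2 => hmid c h1 (by omega)) hselr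
      _ = (B.tile r b).east :=
          ((L2 w s t u B hst hB r b (by omega) (hmid b hb (by omega)) hselr).2.2).symm
      _ = (B.tile r (b+1)).west := B.hmatch r b hr hb1

/-- The submatrix tile assignment. -/
def subTile (B : BPD n) (s t : Fin m ↪o Fin n) : ℕ → ℕ → Tile := fun i j =>
  if h : i < m ∧ j < m then B.tile (s ⟨i, h.1⟩) (t ⟨j, h.2⟩) else Tile.blank

lemma subTile_eq' (i j : ℕ) (hi : i < m) (hj : j < m) :
    subTile B s t i j = B.tile (s ⟨i, hi⟩) (t ⟨j, hj⟩) := dif_pos ⟨hi, hj⟩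

lemma notSelAbove (i' : Fin m) (r : ℕ) (h : ∀ i : Fin m, (i:ℕ) ≤ (i':ℕ)) (hr : (s i' : ℕ) < r) :
    ¬ Sel s r := by
  rintro ⟨i, rfl⟩
  have := (fval_lt s i' i).mp hr
  have := h i
  omega

lemma notSelBelow (i' : Fin m) (r : ℕ) (h : ∀ i : Fin m, (i':ℕ) ≤ (i:ℕ)) (hr : r < (s i' : ℕ)) :
    ¬ Sel s r := by
  rintro ⟨i, rfl⟩
  have := (fval_lt s i i').mp hr
  have := h i
  omega

lemma notSelBetween (i : Fin m) (hi : (i:ℕ)+1 < m) (r : ℕ)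
    (h1 : (s i : ℕ) < r) (h2 : r < (s ⟨(i:ℕ)+1, hi⟩ : ℕ)) : ¬ Sel s r := by
  rintro ⟨i'', rfl⟩
  have := (fval_lt s i i'').mp h1
  have := (fval_lt s i'' ⟨(i:ℕ)+1, hi⟩).mp h2
  simp at this
  omega

include hst hB in
/-- The subdiagram `B'` as a BPD of size `m`. -/
def mkBPD : BPD m where
  tile := subTile B s t
  vmatch := by
    intro i j hi1 hj
    rw [subTile_eq' s t B i j (by omega) hj, subTile_eq' s t B (i+1) j hi1 hj]
    exact vchain w s t u B hst hB _ (t ⟨j, hj⟩).isLt _ _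
      ((fval_lt s ⟨i, by omega⟩ ⟨i+1, hi1⟩).mpr (by simp))
      (s ⟨i+1, hi1⟩).isLt
      (fun r h1 h2 => notSelBetween s ⟨i, by omega⟩ hi1 r h1 h2)
      ⟨⟨j, hj⟩, rfl⟩
  hmatch := by
    intro i j hi hj1
    rw [subTile_eq' s t B i j hi (by omega), subTile_eq' s t B i (j+1) hi hj1]
    refine hchain w s t u B hst hB _ (s ⟨i, hi⟩).isLt _ _
      ((fval_lt t ⟨j, by omega⟩ ⟨j+1, hj1⟩).mpr (by simp))
      (t ⟨j+1, hj1⟩).isLt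
      (fun c h1 h2 => ?_) ⟨⟨i, hi⟩, rfl⟩
    rintro ⟨j'', rfl⟩
    have := (fval_lt t ⟨j, by omega⟩ j'').mp h1
    have := (fval_lt t j'' ⟨j+1, hj1⟩).mp h2
    simp at *
    omega
  bottom := by
    intro j hj
    have hm : 0 < m := by omega
    rw [subTile_eq' s t B (m-1) j (by omega) hj]
    set a := (s ⟨m-1, by omega⟩ : ℕ) with ha
    have han : a < n := (s ⟨m-1, by omega⟩).isLt
    have hnot : ∀ r, a < r → r < n → ¬ Sel s r := fun r h1 _ =>
      notSelAbove s ⟨m-1, by omega⟩ r (fun i => by have := i.isLt; simp; omega) h1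
    rcases eq_or_lt_of_le (by omega : a ≤ n - 1) with he | hl
    · rw [he]; exact B.bottom _ (t ⟨j, hj⟩).isLt
    · have h1 := vchain w s t u B hst hB _ (t ⟨j, hj⟩).isLt a (n-1) hl (by omega)
        (fun r hr1 hr2 => hnot r hr1 (by omega)) ⟨⟨j, hj⟩, rfl⟩
      have h2 := (L1' w s t u B hst hB (n-1) _ (by omega) (hnot (n-1) hl (by omega))
        ⟨⟨j, hj⟩, rfl⟩).2.2
      rw [h1, h2]
      exact B.bottom _ (t ⟨j, hj⟩).isLt
  right := by
    intro i hi
    have hm : 0 < m := by omega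
    rw [subTile_eq' s t B i (m-1) hi (by omega)]
    set a := (t ⟨m-1, by omega⟩ : ℕ) with ha
    have han : a < n := (t ⟨m-1, by omega⟩).isLt
    have hnot : ∀ c, a < c → c < n → ¬ Sel t c := fun c h1 _ =>
      notSelAbove t ⟨m-1, by omega⟩ c (fun i => by have := i.isLt; simp; omega) h1
    rcases eq_or_lt_of_le (by omega : a ≤ n - 1) with he | hl
    · rw [he]; exact B.right _ (s ⟨i, hi⟩).isLt
    · have h1 := hchain w s t u B hst hB _ (s ⟨i, hi⟩).isLt a (n-1) hl (by omega)
        (fun c hc1 hc2 => hnot c hc1 (by omega)) ⟨⟨i, hi⟩, rfl⟩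
      have h2 := (L2 w s t u B hst hB _ (n-1) (by omega) (hnot (n-1) hl (by omega))
        ⟨⟨i, hi⟩, rfl⟩).2.2
      rw [h1, ← h2]
      exact B.right _ (s ⟨i, hi⟩).isLt
  top := by
    intro j hj
    have hm : 0 < m := by omega
    rw [subTile_eq' s t B 0 j hm hj]
    set a := (s ⟨0, hm⟩ : ℕ) with ha
    have han : a < n := (s ⟨0, hm⟩).isLt
    have hnot : ∀ r, r < a → ¬ Sel s r := fun r h1 =>
      notSelBelow s ⟨0, hm⟩ r (fun i => by simp) h1
    rcases Nat.eq_zero_or_pos a with he | hl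
    · rw [he]; exact B.top _ (t ⟨j, hj⟩).isLt
    · have h2 := (L1' w s t u B hst hB 0 _ (by omega) (hnot 0 hl) ⟨⟨j, hj⟩, rfl⟩).2.2
      have h1 := vchain w s t u B hst hB _ (t ⟨j, hj⟩).isLt 0 a hl han
        (fun r hr1 hr2 => hnot r hr2) ⟨⟨j, hj⟩, rfl⟩
      rw [← h1, ← h2]
      exact B.top _ (t ⟨j, hj⟩).isLt
  left := by
    intro i hi
    have hm : 0 < m := by omega
    rw [subTile_eq' s t B i 0 hi hm]
    set a := (t ⟨0, hm⟩ : ℕ) with ha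
    have han : a < n := (t ⟨0, hm⟩).isLt
    have hnot : ∀ c, c < a → ¬ Sel t c := fun c h1 =>
      notSelBelow t ⟨0, hm⟩ c (fun i => by simp) h1
    rcases Nat.eq_zero_or_pos a with he | hl
    · rw [he]; exact B.left _ (s ⟨i, hi⟩).isLt
    · have h2 := (L2 w s t u B hst hB _ 0 (by omega) (hnot 0 hl) ⟨⟨i, hi⟩, rfl⟩).2.2
      have h1 := hchain w s t u B hst hB _ (s ⟨i, hi⟩).isLt 0 a hl han
        (fun c hc1 hc2 => hnot c hc2) ⟨⟨i, hi⟩, rfl⟩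
      rw [← h1, h2]
      exact B.left _ (s ⟨i, hi⟩).isLt
  outside := by
    intro i j h
    exact dif_neg h
  nobump := by
    intro i j
    show subTile B s t i j ≠ Tile.bump
    unfold subTile
    split
    · exact B.nobump _ _
    · exact fun h => Tile.noConfusion h

lemma mkBPD_tile : ∀ i j : Fin m, (mkBPD w s t u B hst hB).tile i j = B.tile (s i) (t j) := by
  intro i j
  show subTile B s t i j = _
  rw [subTile_eq' s t B i j i.isLt j.isLt]

end Ctx

end BPDAux
namespace BPDAux

section Ctx2

variable {n m : ℕ} (w : Equiv.Perm (Fin n)) (s t : Fin m ↪o Fin n) (u : Equiv.Perm (Fin m))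
  (B : BPD n)
  (hst : ∀ i : Fin m, w (s i) = t (u i))
  (hB : B.InBPDv w s)

lemma notSelBetween' (f : Fin m ↪o Fin n) (i1 i2 : Fin m) (hii : (i1:ℕ)+1 = (i2:ℕ)) (r : ℕ)
    (h1 : (f i1 : ℕ) < r) (h2 : r < (f i2 : ℕ)) : ¬ Sel f r := by
  rintro ⟨i'', rfl⟩
  have := (fval_lt f i1 i'').mp h1
  have := (fval_lt f i'' i2).mp h2
  omega

include hst hB in
lemma eastRun : ∀ (i : Fin m) (c : ℕ) (d0 : ℕ), c + d0 < n →
    (∀ e, c ≤ e → e < c + d0 → ¬ Sel t e) →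
    Relation.ReflTransGen B.toDiagram.Step ((s i : ℕ), c, false) ((s i : ℕ), c + d0, false) := by
  intro i c d0
  induction d0 with
  | zero => intro _ _; exact Relation.ReflTransGen.refl
  | succ d0 ih =>
    intro hlt hsel
    refine Relation.ReflTransGen.tail (ih (by omega) (fun e h1 h2 => hsel e h1 (by omega))) ?_
    have hex : (B.tile (s i) (c + d0)).exitEast false = true :=
      L2exit w s t u B hst hB _ _ (by omega) (hsel (c+d0) (by omega) (by omega)) ⟨i, rfl⟩
    exact stepE (s i).isLt (by omega) (by omega) hex
  
include hst hB in
lemma northRun : ∀ (j : Fin m) (r : ℕ) (d0 : ℕ), d0 ≤ r → r < n →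
    (∀ e, r - d0 < e → e ≤ r → ¬ Sel s e) →
    Relation.ReflTransGen B.toDiagram.Step (r, (t j : ℕ), true) (r - d0, (t j : ℕ), true) := by
  intro j r d0
  induction d0 with
  | zero => intro _ _ _; exact Relation.ReflTransGen.refl
  | succ d0 ih =>
    intro hle hr hsel
    refine Relation.ReflTransGen.tail (ih (by omega) hr (fun e h1 h2 => hsel e (by omega) h2)) ?_
    have hns : ¬ Sel s (r - d0) := hsel (r - d0) (by omega) (by omega)
    have hex : (B.tile (r - d0) (t j)).exitEast true = false :=
      L1exit w s t u B hst hB _ _ (by omega) hns ⟨j, rfl⟩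
    have := stepN (by omega : r - d0 < n) (t j).isLt (by omega : 0 < r - d0) hex
    rwa [show r - d0 - 1 = r - (d0+1) by omega] at this

include hst hB in
lemma fpass : ∀ (y : Fin m) (rr : ℕ × ℕ × Bool),
    Relation.ReflTransGen (mkBPD w s t u B hst hB).toDiagram.Step ((m-1 : ℕ), (y:ℕ), true) rr →
    ∃ (h1 : rr.1 < m) (h2 : rr.2.1 < m),
      Relation.ReflTransGen B.toDiagram.Step ((n-1 : ℕ), (t y : ℕ), true)
        ((s ⟨rr.1, h1⟩ : ℕ), (t ⟨rr.2.1, h2⟩ : ℕ), rr.2.2) := by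
  intro y rr hpath
  induction hpath with
  | refl =>
    have hm : 0 < m := by have := y.isLt; omega
    refine ⟨by omega, y.isLt, ?_⟩
    have hsm : (s ⟨m-1, by omega⟩ : ℕ) ≤ n - 1 := by
      have := (s ⟨m-1, by omega⟩).isLt; omega
    have hrun := northRun w s t u B hst hB y (n-1) ((n-1) - (s ⟨m-1, by omega⟩ : ℕ))
      (by omega) (by have : (t y : ℕ) < n := (t y).isLt; omega)
      (fun e h1 h2 => notSelAbove s ⟨m-1, by omega⟩ e
        (fun i' => by have := i'.isLt; simp; omega) (by omega))
    have heq : n - 1 - ((n-1) - (s ⟨m-1, by omega⟩ : ℕ)) = (s ⟨m-1, by omega⟩ : ℕ) := by omega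
    rw [heq] at hrun
    exact hrun
  | @tail b c hbc hstep ih =>
    obtain ⟨h1, h2, ihp⟩ := ih
    obtain ⟨hb1, hb2, hrest⟩ := step_cases hstep
    set i : Fin m := ⟨b.1, h1⟩ with hidef
    set j : Fin m := ⟨b.2.1, h2⟩ with hjdef
    have htile : (mkBPD w s t u B hst hB).tile b.1 b.2.1 = B.tile (s i) (t j) :=
      subTile_eq' s t B b.1 b.2.1 h1 h2
    rcases hrest with ⟨he, hj1, rfl⟩ | ⟨he, hi0, rfl⟩
    · have hexB : (B.tile (s i) (t j)).exitEast b.2.2 = true := by rw [← htile]; exact he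
      set j1 : Fin m := ⟨b.2.1 + 1, hj1⟩ with hj1def
      have htlt : (t j : ℕ) < (t j1 : ℕ) := (fval_lt t j j1).mpr (by simp [hjdef, hj1def])
      have step1 : B.toDiagram.Step ((s i : ℕ), (t j : ℕ), b.2.2) ((s i : ℕ), (t j : ℕ) + 1, false) :=
        stepE (s i).isLt (t j).isLt (by have := (t j1).isLt; omega) hexB
      have hrun := eastRun w s t u B hst hB i ((t j : ℕ) + 1) ((t j1 : ℕ) - ((t j : ℕ) + 1))
        (by have := (t j1).isLt; omega)
        (fun e he1 he2 => notSelBetween' t j j1 (by simp [hjdef, hj1def]) e (by omega) (by omega))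
      have heq : (t j : ℕ) + 1 + ((t j1 : ℕ) - ((t j : ℕ) + 1)) = (t j1 : ℕ) := by omega
      rw [heq] at hrun
      exact ⟨h1, hj1, (ihp.tail step1).trans hrun⟩
    · have hexB : (B.tile (s i) (t j)).exitEast b.2.2 = false := by rw [← htile]; exact he
      set i0 : Fin m := ⟨b.1 - 1, by omega⟩ with hi0def
      have hslt : (s i0 : ℕ) < (s i : ℕ) := (fval_lt s i0 i).mpr (by simp [hidef, hi0def]; omega)
      have step1 : B.toDiagram.Step ((s i : ℕ), (t j : ℕ), b.2.2) ((s i : ℕ) - 1, (t j : ℕ), true) :=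
        stepN (s i).isLt (t j).isLt (by omega) hexB
      have hrun := northRun w s t u B hst hB j ((s i : ℕ) - 1) (((s i : ℕ) - 1) - (s i0 : ℕ))
        (by omega) (by have := (s i).isLt; omega)
        (fun e he1 he2 => notSelBetween' s i0 i (by simp [hidef, hi0def]; omega) e (by omega) (by omega))
      have heq : (s i : ℕ) - 1 - (((s i : ℕ) - 1) - (s i0 : ℕ)) = (s i0 : ℕ) := by omega
      rw [heq] at hrun
      exact ⟨by omega, h2, (ihp.tail step1).trans hrun⟩

include hst hB in
lemma mkReduced (hred : B.toDiagram.Reduced) : (mkBPD w s t u B hst hB).toDiagram.Reduced := by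
  intro y1 y2 hy1 hy2 hne p hp q hq
  obtain ⟨hpt, hp1, hp2⟩ := hp
  obtain ⟨hqt, hq1, hq2⟩ := hq
  have hpin : p.1 < m ∧ p.2 < m := by
    by_contra hcon
    rw [show (mkBPD w s t u B hst hB).tile p.1 p.2 = Tile.blank from dif_neg hcon] at hpt
    exact Tile.noConfusion hpt
  have hqin : q.1 < m ∧ q.2 < m := by
    by_contra hcon
    rw [show (mkBPD w s t u B hst hB).tile q.1 q.2 = Tile.blank from dif_neg hcon] at hqt
    exact Tile.noConfusion hqt
  set y1f : Fin m := ⟨y1, hy1⟩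
  set y2f : Fin m := ⟨y2, hy2⟩
  have key : ∀ (yf : Fin m) (c : ℕ × ℕ), (mkBPD w s t u B hst hB).toDiagram.Passes (yf : ℕ) c →
      ∀ (h1 : c.1 < m) (h2 : c.2 < m),
      B.toDiagram.Passes (t yf : ℕ) ((s ⟨c.1, h1⟩ : ℕ), (t ⟨c.2, h2⟩ : ℕ)) := by
    rintro yf c ⟨d, hd⟩ h1 h2
    obtain ⟨h1', h2', hp⟩ := fpass w s t u B hst hB yf (c.1, c.2, d) hd
    exact ⟨d, hp⟩
  have hps : ((s ⟨p.1, hpin.1⟩ : ℕ), (t ⟨p.2, hpin.2⟩ : ℕ)) ∈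
      B.toDiagram.SharedCrossings (t y1f) (t y2f) := by
    refine ⟨?_, key y1f p hp1 hpin.1 hpin.2, key y2f p hp2 hpin.1 hpin.2⟩
    rw [← subTile_eq' s t B p.1 p.2 hpin.1 hpin.2]
    exact hpt
  have hqs : ((s ⟨q.1, hqin.1⟩ : ℕ), (t ⟨q.2, hqin.2⟩ : ℕ)) ∈
      B.toDiagram.SharedCrossings (t y1f) (t y2f) := by
    refine ⟨?_, key y1f q hq1 hqin.1 hqin.2, key y2f q hq2 hqin.1 hqin.2⟩
    rw [← subTile_eq' s t B q.1 q.2 hqin.1 hqin.2]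
    exact hqt
  have hne' : (t y1f : ℕ) ≠ (t y2f : ℕ) := by
    intro hcon
    exact hne (by simpa [y1f, y2f] using congrArg Fin.val (fval_inj t y1f y2f hcon))
  have := hred (t y1f) (t y2f) (t y1f).isLt (t y2f).isLt hne' hps hqs
  have e1 : (s ⟨p.1, hpin.1⟩ : ℕ) = (s ⟨q.1, hqin.1⟩ : ℕ) := congrArg Prod.fst this
  have e2 : (t ⟨p.2, hpin.2⟩ : ℕ) = (t ⟨q.2, hqin.2⟩ : ℕ) := congrArg Prod.snd this
  have e1' := congrArg Fin.val (fval_inj s _ _ e1)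
  have e2' := congrArg Fin.val (fval_inj t _ _ e2)
  simp at e1' e2'
  exact Prod.ext e1' e2'

end Ctx2

end BPDAux
namespace BPDAux

section Generic

variable {n : ℕ}

/-- Entry-consistency invariant for pipe states. -/
def Inv (B : BPD n) (σ : ℕ × ℕ × Bool) : Prop :=
  σ.1 < n ∧ σ.2.1 < n ∧ (σ.2.2 = true → (B.tile σ.1 σ.2.1).south = true) ∧
    (σ.2.2 = false → (B.tile σ.1 σ.2.1).west = true)

lemma exTT : ∀ t : Tile, t.exitEast true = true → t = Tile.relbow ∨ t = Tile.bump := by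
  intro t h; cases t <;> simp_all [Tile.exitEast]

lemma exFF : ∀ t : Tile, t.exitEast false = false → t = Tile.jelbow ∨ t = Tile.bump := by
  intro t h; cases t <;> simp_all [Tile.exitEast]

lemma exTF : ∀ t : Tile, t.exitEast true = false → t ≠ Tile.relbow ∧ t ≠ Tile.bump := by
  intro t h; cases t <;> simp_all [Tile.exitEast]

lemma invStep {B : BPD n} {σ σ' : ℕ × ℕ × Bool} (h : B.toDiagram.Step σ σ') (hI : Inv B σ) :
    Inv B σ' := by
  obtain ⟨h1, h2, h3, h4⟩ := hI
  obtain ⟨_, _, hc⟩ := step_cases h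
  rcases hc with ⟨he, hc1, rfl⟩ | ⟨he, h0, rfl⟩
  · have hc1' : σ.2.1 + 1 < n := hc1
    refine ⟨h1, hc1', fun hcon => Bool.noConfusion hcon, fun _ => ?_⟩
    show (B.tile σ.1 (σ.2.1 + 1)).west = true
    rw [← B.hmatch σ.1 σ.2.1 h1 hc1']
    cases hd : σ.2.2
    · rw [hd] at he
      rcases tWT _ (h4 hd) (B.nobump _ _) with h' | h' | h'
      · rw [h']; rfl
      · rw [h']; rfl
      · rw [h'] at he; exact absurd he (by simp [Tile.exitEast])
    · rw [hd] at he
      rcases exTT _ he with h' | h'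
      · rw [h']; rfl
      · exact absurd h' (B.nobump _ _)
  · have h0' : 0 < σ.1 := h0
    refine ⟨by omega, h2, fun _ => ?_, fun hcon => Bool.noConfusion hcon⟩
    show (B.tile (σ.1 - 1) σ.2.1).south = true
    have hv := B.vmatch (σ.1 - 1) σ.2.1 (by omega) h2
    rw [show σ.1 - 1 + 1 = σ.1 by omega] at hv
    rw [hv]
    cases hd : σ.2.2
    · rw [hd] at he
      rcases exFF _ he with h' | h'
      · rw [h']; rfl
      · exact absurd h' (B.nobump _ _)
    · rw [hd] at he
      obtain ⟨hr, hb⟩ := exTF _ he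
      rcases tST _ (h3 hd) hr hb with h' | h' <;> (rw [h']; rfl)

lemma stepDet {D : Diagram n} {σ τ1 τ2 : ℕ × ℕ × Bool} (h1 : D.Step σ τ1) (h2 : D.Step σ τ2) :
    τ1 = τ2 := by
  obtain ⟨_, _, c1⟩ := step_cases h1
  obtain ⟨_, _, c2⟩ := step_cases h2
  rcases c1 with ⟨e1, _, rfl⟩ | ⟨e1, _, rfl⟩ <;> rcases c2 with ⟨e2, _, rfl⟩ | ⟨e2, _, rfl⟩ <;>
    simp_all

lemma reachUnique {D : Diagram n} {a b c : ℕ × ℕ × Bool}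
    (hab : Relation.ReflTransGen D.Step a b) (hb : ∀ τ, ¬ D.Step b τ)
    (hc : ∀ τ, ¬ D.Step c τ) :
    Relation.ReflTransGen D.Step a c → b = c := by
  induction hab using Relation.ReflTransGen.head_induction_on with
  | refl =>
    intro hac
    rcases hac.cases_head with heq | ⟨d, had, _⟩
    · exact heq
    · exact absurd had (hb d)
  | head hstep hrest ih =>
    intro hac
    rcases hac.cases_head with heq | ⟨d, had, hdc⟩
    · exact absurd hstep (heq ▸ hc _)
    · rw [stepDet had hstep] at hdc
      exact ih hdc

lemma exit_stuck {D : Diagram n} {x : ℕ} {d : Bool} (hex : (D.tile x (n-1)).exitEast d = true) :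
    ∀ τ, ¬ D.Step (x, n-1, d) τ := by
  intro τ h
  obtain ⟨h1, h2, hcs⟩ := step_cases h
  have h2' : n - 1 < n := h2
  rcases hcs with ⟨he, hc1, _⟩ | ⟨he, _, _⟩
  · have : n - 1 + 1 < n := hc1
    omega
  · have he' : (D.tile x (n-1)).exitEast d = false := he
    rw [hex] at he'
    exact Bool.noConfusion he'

lemma exitsUnique {D : Diagram n} {y x1 x2 : ℕ} (h1 : D.ExitsAt y x1) (h2 : D.ExitsAt y x2) :
    x1 = x2 := by
  obtain ⟨d1, p1, e1⟩ := h1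
  obtain ⟨d2, p2, e2⟩ := h2
  exact congrArg Prod.fst (reachUnique p1 (exit_stuck e1) (exit_stuck e2) p2)

end Generic

end BPDAux
namespace BPDAux

section Ctx3

variable {n m : ℕ} (w : Equiv.Perm (Fin n)) (s t : Fin m ↪o Fin n) (u : Equiv.Perm (Fin m))
  (B : BPD n)
  (hst : ∀ i : Fin m, w (s i) = t (u i))
  (hB : B.InBPDv w s)

/-- The relation between a `B`-pipe state and the `B'`-state it represents. -/
def RelSt (s t : Fin m ↪o Fin n) (σ : ℕ × ℕ × Bool) (i j : Fin m) (d : Bool) : Prop :=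
  σ = ((s i : ℕ), (t j : ℕ), d) ∨
  (σ.2.2 = false ∧ d = false ∧ σ.1 = (s i : ℕ) ∧ σ.2.1 < (t j : ℕ) ∧
    ∀ e, σ.2.1 ≤ e → e < (t j : ℕ) → ¬ Sel t e) ∨
  (σ.2.2 = true ∧ d = true ∧ σ.2.1 = (t j : ℕ) ∧ (s i : ℕ) < σ.1 ∧
    ∀ e, (s i : ℕ) < e → e ≤ σ.1 → ¬ Sel s e)

include hst hB in
lemma mkExits (x : Fin m) :
    (mkBPD w s t u B hst hB).toDiagram.ExitsAt ((u x : ℕ)) ((x : ℕ)) := by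
  have hm : 0 < m := by have := x.isLt; omega
  have hn : 0 < n := by have := (s x).isLt; omega
  have htile' := mkBPD_tile w s t u B hst hB
  obtain ⟨dfin, hpath, hexit⟩ : B.toDiagram.ExitsAt (t (u x) : ℕ) (s x : ℕ) := by
    have := hB.1 (s x)
    rwa [hst x] at this
  -- a pipe travelling east in a selected row, past all selected columns, exits in that row
  have eastFinal : ∀ σ : ℕ × ℕ × Bool,
      Relation.ReflTransGen B.toDiagram.Step σ ((s x : ℕ), n-1, dfin) →
      Inv B σ → σ.2.2 = false → Sel s σ.1 → (∀ e, σ.2.1 ≤ e → e < n → ¬ Sel t e) →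
      σ.1 = (s x : ℕ) := by
    intro σ hp
    induction hp using Relation.ReflTransGen.head_induction_on with
    | refl => intro _ _ _ _; rfl
    | head hstep hrest ih =>
      intro hinv hfalse hselr hnone
      have hinv' := invStep hstep hinv
      obtain ⟨h1, h2, hc⟩ := step_cases hstep
      rcases hc with ⟨he, hc1, rfl⟩ | ⟨he, h0, rfl⟩
      · exact ih hinv' rfl hselr (fun e he1 he2 => hnone e (by
          have he1' : _ + 1 ≤ e := he1; omega) he2)
      · exfalso
        rw [hfalse] at he
        have hL := L2exit w s t u B hst hB _ _ h2 (hnone _ le_rfl h2) hselr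
        rw [hL] at he
        exact Bool.noConfusion he
  -- a pipe travelling north in a selected column, past all selected rows, is impossible
  have northDead : ∀ σ : ℕ × ℕ × Bool,
      Relation.ReflTransGen B.toDiagram.Step σ ((s x : ℕ), n-1, dfin) →
      Inv B σ → σ.2.2 = true → Sel t σ.2.1 → (∀ e, e ≤ σ.1 → ¬ Sel s e) → False := by
    intro σ hp
    induction hp using Relation.ReflTransGen.head_induction_on with
    | refl => intro _ _ _ hnone; exact hnone _ le_rfl ⟨x, rfl⟩
    | head hstep hrest ih =>
      intro hinv htrue hselc hnone
      have hinv' := invStep hstep hinv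
      obtain ⟨h1, h2, hc⟩ := step_cases hstep
      rcases hc with ⟨he, hc1, rfl⟩ | ⟨he, h0, rfl⟩
      · rw [htrue] at he
        have hL := L1exit w s t u B hst hB _ _ h1 (hnone _ le_rfl) hselc
        rw [hL] at he
        exact Bool.noConfusion he
      · exact ih hinv' rfl hselc (fun e he1 => hnone e (by
          have he1' : e ≤ _ - 1 := he1; omega))
  -- main backward simulation
  have main : ∀ σ : ℕ × ℕ × Bool,
      Relation.ReflTransGen B.toDiagram.Step σ ((s x : ℕ), n-1, dfin) →
      Inv B σ → ∀ (i j : Fin m) (d : Bool), RelSt s t σ i j d →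
      ∃ d'' : Bool,
        Relation.ReflTransGen (mkBPD w s t u B hst hB).toDiagram.Step
          ((i : ℕ), (j : ℕ), d) ((x : ℕ), m-1, d'') ∧
        ((mkBPD w s t u B hst hB).tile (x : ℕ) (m-1)).exitEast d'' = true := by
    intro σ hp
    induction hp using Relation.ReflTransGen.head_induction_on with
    | refl =>
      intro hinv i j d hrel
      rcases hrel with heq | ⟨hf, _, _, hlt, _⟩ | ⟨_, _, hc, hlow, hrows⟩
      · -- at the final state
        have e1 : (s x : ℕ) = (s i : ℕ) := congrArg (Prod.fst) heq
        have e2 : n - 1 = (t j : ℕ) := congrArg (fun p => p.2.1) heq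
        have e3 : dfin = d := congrArg (fun p => p.2.2) heq
        have hix : i = x := (fval_inj s x i e1).symm
        have hjm : (j : ℕ) = m - 1 := by
          by_contra hcon
          have hjlt : (j : ℕ) < m - 1 := by have := j.isLt; omega
          have := (fval_lt t j ⟨m-1, by omega⟩).mpr hjlt
          have := (t ⟨m-1, by omega⟩).isLt
          omega
        refine ⟨d, ?_, ?_⟩
        · rw [show (i : ℕ) = (x : ℕ) from congrArg Fin.val hix, hjm]
        · rw [show (m-1 : ℕ) = (j : ℕ) from hjm.symm, htile' x j, ← e2, ← e3]
          exact hexit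
      · -- eastbound: impossible at the final state
        have hc' : n - 1 < (t j : ℕ) := hlt
        have := (t j).isLt
        omega
      · -- northbound: impossible at the final state
        have hc' : (s i : ℕ) < (s x : ℕ) := hlow
        exact absurd ⟨x, rfl⟩ (hrows _ hc' le_rfl)
    | @head a a' hstep hrest ih =>
      intro hinv i j d hrel
      have hinv' := invStep hstep hinv
      obtain ⟨h1, h2, hc⟩ := step_cases hstep
      rcases hrel with heq | ⟨hf, hd, hr, hlt, hcols⟩ | ⟨hf, hd, hcc, hlow, hrows⟩
      · -- exactly at a B'-state
        subst heq
        have h1' : (s i : ℕ) < n := h1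
        have h2' : (t j : ℕ) < n := h2
        rcases hc with ⟨he, hc1, rfl⟩ | ⟨he, h0, rfl⟩
        · -- east move
          have he' : (B.tile (s i) (t j)).exitEast d = true := he
          by_cases hj1 : (j : ℕ) + 1 < m
          · set j1 : Fin m := ⟨(j : ℕ) + 1, hj1⟩ with hj1def
            have htlt : (t j : ℕ) < (t j1 : ℕ) := (fval_lt t j j1).mpr (by simp [hj1def])
            have hrel' : RelSt s t ((s i : ℕ), (t j : ℕ) + 1, false) i j1 false := by
              rcases eq_or_lt_of_le (by omega : (t j : ℕ) + 1 ≤ (t j1 : ℕ)) with heq2 | hlt2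
              · left; rw [heq2]
              · right; left
                exact ⟨rfl, rfl, rfl, hlt2,
                  fun e he1 he2 => notSelBetween' t j j1 (by simp [hj1def]) e
                    (by have he1' : (t j : ℕ) + 1 ≤ e := he1; omega)
                    (by have he2' : e < (t j1 : ℕ) := he2; omega)⟩
            obtain ⟨d'', hp', hx'⟩ := ih hinv' i j1 false hrel'
            refine ⟨d'', hp'.head ?_, hx'⟩
            have hexB' : ((mkBPD w s t u B hst hB).tile (i : ℕ) (j : ℕ)).exitEast d = true := by
              rw [htile' i j]; exact he'
            exact stepE i.isLt j.isLt hj1 hexB'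
          · -- past the last selected column: we are in the exit row
            have hjm : (j : ℕ) = m - 1 := by have := j.isLt; omega
            have hfin : (s i : ℕ) = (s x : ℕ) := by
              refine eastFinal ((s i : ℕ), (t j : ℕ) + 1, false) hrest hinv' rfl ⟨i, rfl⟩ ?_
              intro e he1 he2
              refine notSelAbove t j e (fun j' => by have := j'.isLt; omega) ?_
              have he1' : (t j : ℕ) + 1 ≤ e := he1
              omega
            have hix : (i : ℕ) = (x : ℕ) := congrArg Fin.val (fval_inj s i x hfin)
            refine ⟨d, ?_, ?_⟩
            · rw [← hix, ← hjm]
            · rw [← hix, ← hjm, htile' i j]; exact he'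
        · -- north move
          have he' : (B.tile (s i) (t j)).exitEast d = false := he
          have h0' : 0 < (s i : ℕ) := h0
          by_cases hi0 : 0 < (i : ℕ)
          · set i0 : Fin m := ⟨(i : ℕ) - 1, by omega⟩ with hi0def
            have hslt : (s i0 : ℕ) < (s i : ℕ) := (fval_lt s i0 i).mpr (by simp [hi0def]; omega)
            have hrel' : RelSt s t ((s i : ℕ) - 1, (t j : ℕ), true) i0 j true := by
              rcases eq_or_lt_of_le (by omega : (s i0 : ℕ) ≤ (s i : ℕ) - 1) with heq2 | hlt2
              · left; rw [← heq2]
              · right; right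
                exact ⟨rfl, rfl, rfl, hlt2,
                  fun e he1 he2 => notSelBetween' s i0 i (by simp [hi0def]; omega) e
                    (by have he1' : (s i0 : ℕ) < e := he1; omega)
                    (by have he2' : e ≤ (s i : ℕ) - 1 := he2; omega)⟩
            obtain ⟨d'', hp', hx'⟩ := ih hinv' i0 j true hrel'
            refine ⟨d'', hp'.head ?_, hx'⟩
            have hexB' : ((mkBPD w s t u B hst hB).tile (i : ℕ) (j : ℕ)).exitEast d = false := by
              rw [htile' i j]; exact he'
            exact stepN i.isLt j.isLt hi0 hexB'
          · -- above the first selected row: impossible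
            exfalso
            refine northDead ((s i : ℕ) - 1, (t j : ℕ), true) hrest hinv' rfl ⟨j, rfl⟩ ?_
            intro e he1
            have he1' : e ≤ (s i : ℕ) - 1 := he1
            refine notSelBelow s i e (fun i' => by omega) (by omega)
      · -- eastbound intermediate state
        subst hd
        have hnsel : ¬ Sel t a.2.1 := hcols _ le_rfl hlt
        have hL := L2exit w s t u B hst hB a.1 a.2.1 h2 hnsel ⟨i, hr.symm⟩
        rcases hc with ⟨he, hc1, rfl⟩ | ⟨he, h0, rfl⟩
        · refine ih hinv' i j false ?_
          rcases eq_or_lt_of_le (by omega : a.2.1 + 1 ≤ (t j : ℕ)) with heq2 | hlt2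
          · left
            show (a.1, a.2.1 + 1, false) = _
            rw [heq2, hr]
          · right; left
            exact ⟨rfl, rfl, hr, hlt2, fun e he1 he2 => hcols e
              (by have he1' : a.2.1 + 1 ≤ e := he1; omega) he2⟩
        · exfalso
          rw [hf] at he
          rw [hL] at he
          exact Bool.noConfusion he
      · -- northbound intermediate state
        subst hd
        have hnsel : ¬ Sel s a.1 := hrows _ hlow le_rfl
        have hL := L1exit w s t u B hst hB a.1 a.2.1 h1 hnsel ⟨j, hcc.symm⟩
        rcases hc with ⟨he, hc1, rfl⟩ | ⟨he, h0, rfl⟩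
        · exfalso
          rw [hf] at he
          rw [hL] at he
          exact Bool.noConfusion he
        · refine ih hinv' i j true ?_
          have h0' : 0 < a.1 := h0
          rcases eq_or_lt_of_le (by omega : (s i : ℕ) ≤ a.1 - 1) with heq2 | hlt2
          · left
            show (a.1 - 1, a.2.1, true) = _
            rw [← heq2, hcc]
          · right; right
            exact ⟨rfl, rfl, hcc, hlt2, fun e he1 he2 => hrows e he1
              (by have he2' : e ≤ a.1 - 1 := he2; omega)⟩
  -- apply the simulation to the start state
  have hinv0 : Inv B ((n-1 : ℕ), (t (u x) : ℕ), true) :=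
    ⟨by omega, (t (u x)).isLt, fun _ => B.bottom _ (t (u x)).isLt,
      fun hcon => Bool.noConfusion hcon⟩
  have hrel0 : RelSt s t ((n-1 : ℕ), (t (u x) : ℕ), true) ⟨m-1, by omega⟩ (u x) true := by
    have hsm : (s ⟨m-1, by omega⟩ : ℕ) ≤ n - 1 := by
      have := (s ⟨m-1, by omega⟩).isLt; omega
    rcases eq_or_lt_of_le hsm with heq | hlt
    · left; rw [heq]
    · right; right
      refine ⟨rfl, rfl, rfl, hlt, fun e he1 he2 => ?_⟩
      refine notSelAbove s ⟨m-1, by omega⟩ e (fun i' => by have := i'.isLt; simp; omega) ?_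
      have he1' : (s ⟨m-1, by omega⟩ : ℕ) < e := he1
      omega
  obtain ⟨d'', hp', hx'⟩ := main _ hpath hinv0 ⟨m-1, by omega⟩ (u x) true hrel0
  exact ⟨d'', hp', hx'⟩

include hst hB in
lemma mkHasPerm : (mkBPD w s t u B hst hB).toDiagram.HasPerm u :=
  fun x => mkExits w s t u B hst hB x

include hst hB in
lemma mkMinimal : (mkBPD w s t u B hst hB).toDiagram.Minimal := by
  intro y x0 hrp
  obtain ⟨hex', hrel', hrow', hcol'⟩ := hrp
  have hbound : x0 < m ∧ y < m := by
    by_contra hcon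
    rw [show (mkBPD w s t u B hst hB).tile x0 y = Tile.blank from dif_neg hcon] at hrel'
    exact Tile.noConfusion hrel'
  have htile' := mkBPD_tile w s t u B hst hB
  set yf : Fin m := ⟨y, hbound.2⟩ with hyfdef
  set xf : Fin m := u.symm yf with hxfdef
  have huxf : u xf = yf := Equiv.apply_symm_apply u yf
  have hex2 : (mkBPD w s t u B hst hB).toDiagram.ExitsAt y (xf : ℕ) := by
    have := mkExits w s t u B hst hB xf
    rwa [huxf] at this
  have hx0 : x0 = (xf : ℕ) := exitsUnique hex' hex2
  have hrelB : B.toDiagram.RemovablePipe (t yf : ℕ) (s xf : ℕ) := by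
    refine ⟨?_, ?_, ?_, ?_⟩
    · have := hB.1 (s xf)
      rw [hst xf, huxf] at this
      exact this
    · have := htile' xf yf
      rw [← hx0] at this
      rw [← this]
      exact hrel'
    · intro jn hjn
      rcases lt_or_ge jn n with hjnn | hjnn
      · by_cases hseljn : Sel t jn
        · obtain ⟨j', rfl⟩ := hseljn
          have hj'y : (j' : ℕ) ≠ y := by
            intro hcon
            exact hjn (by rw [show j' = yf from Fin.ext hcon])
          have h2 := htile' xf j'
          rw [← hx0] at h2
          rw [← h2]
          exact hrow' _ hj'y
        · exact (L2 w s t u B hst hB (s xf : ℕ) jn hjnn hseljn ⟨xf, rfl⟩).1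
      · rw [B.outside _ _ (by omega)]
        exact fun hcon => Tile.noConfusion hcon
    · intro im him
      rcases lt_or_ge im n with himn | himn
      · by_cases hselim : Sel s im
        · obtain ⟨i', rfl⟩ := hselim
          have hi'x : (i' : ℕ) ≠ x0 := by
            intro hcon
            exact him (by rw [show i' = xf from Fin.ext (by omega)])
          have h2 := htile' i' yf
          rw [← h2]
          exact hcol' _ hi'x
        · exact (L1' w s t u B hst hB im (t yf : ℕ) himn hselim ⟨yf, rfl⟩).1
      · rw [B.outside _ _ (by omega)]
        exact fun hcon => Tile.noConfusion hcon
  obtain ⟨k, hk, hxk, _⟩ := (hB.2 _ _).mp hrelB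
  exact hk ⟨xf, (Fin.val_injective hxk.symm).symm⟩

end Ctx3

end BPDAux
/-- Proposition `bpd_include`.  Let `w ∈ S_n`, let `v ⊆ w` be
a subword of size `m` with index sequence `s` and entry sequence `t`, and set
`u := perm(v) ∈ S_m`.  If `B ∈ bpd(w; v)` is a reduced bumpless pipe dream,
then `φ_v^w(B)` is reduced; consequently `φ_v^w(bpd(w; v)) ⊆ mbpd(u)`. -/
theorem removing_pipes_preserves_reduced {n m : ℕ} (w : Equiv.Perm (Fin n))
    (s t : Fin m ↪o Fin n) (u : Equiv.Perm (Fin m))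
    (hst : ∀ i : Fin m, w (s i) = t (u i))
    (B : BPD n) (hB : B.InBPDv w s) (hred : B.toDiagram.Reduced) :
    ∃ B' : BPD m, (∀ i j : Fin m, B'.tile i j = B.tile (s i) (t j)) ∧
      B'.toDiagram.HasPerm u ∧ B'.toDiagram.Reduced ∧ B'.toDiagram.Minimal := by
  exact ⟨BPDAux.mkBPD w s t u B hst hB, BPDAux.mkBPD_tile w s t u B hst hB,
    BPDAux.mkHasPerm w s t u B hst hB, BPDAux.mkReduced w s t u B hst hB hred,
    BPDAux.mkMinimal w s t u B hst hB⟩
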